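/- arXiv:2009.04781 — 5 statements merged into one kernel-verified Lean document; each statement's English description precedes it below -/
import Mathlib

section
/- Let a₁ < a₂ and b = 𝟙_{[a₁,a₂]}. Then for every s > 0 and every y, z ∈ ℝ, s^(−1/2) · ∫_{ℝ} |b(x+y+z) − b(x+y)|² e^(−x²/s) dx ≤ 2 s^(−1/2) |z|; in particular b satisfies assumption (A2) with α = 1 and φ(s) = 2 s^(−1/2). -/
/-!
A shift by `z` changes the indicator of `[a₁, a₂]` only on two intervals of length `|z|` around
the endpoints, and there `|b(x + y + z) - b(x + y)|² = 1`; since the Gaussian weight is at most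
`1`, the integral is bounded by the measure `2|z|` of these intervals.
-/

open MeasureTheory Set
open scoped symmDiff

lemma Set.Icc_symmDiff_Icc_subset {α : Type*} [LinearOrder α] (a b c d : α) :
    Icc a b ∆ Icc c d ⊆ uIcc a c ∪ uIcc b d := by
  intro x hx
  simp only [mem_symmDiff, mem_Icc, not_and_or, not_le] at hx
  simp only [mem_union, mem_uIcc]
  rcases hx with ⟨⟨hax, hxb⟩, hxc | hdx⟩ | ⟨⟨hcx, hxd⟩, hxa | hbx⟩
  · exact Or.inl (Or.inl ⟨hax, hxc.le⟩)
  · exact Or.inr (Or.inr ⟨hdx.le, hxb⟩)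
  · exact Or.inl (Or.inr ⟨hcx, hxa.le⟩)
  · exact Or.inr (Or.inl ⟨hbx.le, hxd⟩)

lemma Real.volume_Icc_symmDiff_Icc_le (a b c d : ℝ) :
    volume (Icc a b ∆ Icc c d) ≤ ENNReal.ofReal (|c - a| + |d - b|) :=
  calc volume (Icc a b ∆ Icc c d)
      ≤ volume (uIcc a c ∪ uIcc b d) := measure_mono (Icc_symmDiff_Icc_subset a b c d)
    _ ≤ volume (uIcc a c) + volume (uIcc b d) := measure_union_le _ _
    _ = ENNReal.ofReal (|c - a| + |d - b|) := by
      rw [Real.volume_interval, Real.volume_interval,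
        ENNReal.ofReal_add (abs_nonneg _) (abs_nonneg _)]

lemma Set.indicator_one_Icc_add_const {α M : Type*} [AddCommGroup α] [LinearOrder α]
    [IsOrderedAddMonoid α] [Zero M] [One M] (a b c x : α) :
    (Icc a b).indicator (1 : α → M) (x + c) = (Icc (a - c) (b - c)).indicator 1 x := by
  rw [← preimage_add_const_Icc, ← indicator_comp_right (fun x => x + c)]
  rfl

lemma sq_abs_indicator_one_sub_indicator_one {α : Type*} (s t : Set α) (x : α) :
    |s.indicator (1 : α → ℝ) x - t.indicator 1 x| ^ 2 = (s ∆ t).indicator 1 x := by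
  rw [← abs_indicator_symmDiff]
  by_cases hx : x ∈ s ∆ t <;> simp [hx]

lemma integral_sq_abs_indicator_sub_indicator_mul_le {α : Type*} [MeasurableSpace α]
    {μ : Measure α} {s t : Set α} (hs : MeasurableSet s) (ht : MeasurableSet t)
    (hst : μ (s ∆ t) < ⊤) {w : α → ℝ} (hw : ∀ x, ‖w x‖ ≤ 1) :
    ∫ x, |s.indicator 1 x - t.indicator 1 x| ^ 2 * w x ∂μ ≤ μ.real (s ∆ t) := by
  have h_integrand : (fun x => |s.indicator 1 x - t.indicator 1 x| ^ 2 * w x)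
      = (s ∆ t).indicator w := by
    ext x
    rw [sq_abs_indicator_one_sub_indicator_one]
    by_cases hx : x ∈ s ∆ t <;> simp [hx]
  calc ∫ x, |s.indicator 1 x - t.indicator 1 x| ^ 2 * w x ∂μ
      = ∫ x in s ∆ t, w x ∂μ := by rw [h_integrand, integral_indicator (hs.symmDiff ht)]
    _ ≤ ‖∫ x in s ∆ t, w x ∂μ‖ := Real.le_norm_self _
    _ ≤ 1 * μ.real (s ∆ t) := norm_setIntegral_le_of_norm_le_const hst fun x _ => hw x
    _ = μ.real (s ∆ t) := one_mul _

theorem stmt4_general (a₁ a₂ : ℝ) (b : ℝ → ℝ)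
    (hb : b = Set.indicator (Set.Icc a₁ a₂) 1)
    (s : ℝ) (hs : 0 < s) (y z : ℝ) :
    s ^ (-(1:ℝ)/2) * ∫ x : ℝ, |b (x + y + z) - b (x + y)| ^ 2 * Real.exp (-x ^ 2 / s)
      ≤ 2 * s ^ (-(1:ℝ)/2) * |z| := by
  set A := Icc (a₁ - (y + z)) (a₂ - (y + z))
  set B := Icc (a₁ - y) (a₂ - y)
  have hbA : ∀ x, b (x + y + z) = A.indicator 1 x := fun x => by
    rw [hb, add_assoc, indicator_one_Icc_add_const]
  have hbB : ∀ x, b (x + y) = B.indicator 1 x := fun x => by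
    rw [hb, indicator_one_Icc_add_const]
  have hvol : volume (A ∆ B) ≤ ENNReal.ofReal (2 * |z|) := by
    convert Real.volume_Icc_symmDiff_Icc_le _ _ _ _ using 2
    rw [show a₁ - y - (a₁ - (y + z)) = z by ring, show a₂ - y - (a₂ - (y + z)) = z by ring]
    ring
  have hweight : ∀ x, ‖Real.exp (-x ^ 2 / s)‖ ≤ 1 := fun x => by
    rw [Real.norm_of_nonneg (Real.exp_nonneg _), Real.exp_le_one_iff]
    exact div_nonpos_of_nonpos_of_nonneg (neg_nonpos.mpr (sq_nonneg x)) hs.le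
  have hint : ∫ x : ℝ, |b (x + y + z) - b (x + y)| ^ 2 * Real.exp (-x ^ 2 / s) ≤ 2 * |z| := by
    simp only [hbA, hbB]
    calc _ ≤ volume.real (A ∆ B) := integral_sq_abs_indicator_sub_indicator_mul_le
            measurableSet_Icc measurableSet_Icc (hvol.trans_lt ENNReal.ofReal_lt_top) hweight
      _ ≤ 2 * |z| := ENNReal.toReal_le_of_le_ofReal (by positivity) hvol
  calc s ^ (-(1:ℝ)/2) * ∫ x : ℝ, |b (x + y + z) - b (x + y)| ^ 2 * Real.exp (-x ^ 2 / s)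
      ≤ s ^ (-(1:ℝ)/2) * (2 * |z|) := mul_le_mul_of_nonneg_left hint (by positivity)
    _ = 2 * s ^ (-(1:ℝ)/2) * |z| := by ring

theorem stmt4 (a₁ a₂ : ℝ) (h : a₁ < a₂) (b : ℝ → ℝ)
    (hb : b = Set.indicator (Set.Icc a₁ a₂) 1)
    (s : ℝ) (hs : 0 < s) (y z : ℝ) :
    s ^ (-(1:ℝ)/2) * ∫ x : ℝ, |b (x + y + z) - b (x + y)| ^ 2 * Real.exp (-x ^ 2 / s)
      ≤ 2 * s ^ (-(1:ℝ)/2) * |z| :=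
  stmt4_general a₁ a₂ b hb s hs y z
end

section
/- Let A, B be symmetric positive semidefinite d×d real matrices with λ̌₀ I ≤ A, B ≤ λ̂₀ I (as quadratic forms) for 0 < λ̌₀ ≤ λ̂₀. If moreover ‖A^{1/2} − B^{1/2}‖_{HS} ≤ L₀ δ (coming from σ Lipschitz), then |det A − det B| ≤ 2 d^{d/2+1} d! λ̂₀^{d−1/2} L₀ δ. -/
/-!
Let `S`, `T` be the square roots of `A`, `B`. Testing the quadratic form on basis vectors gives
`A i i ≤ λ̂`, i.e. every row of `S` has squared length at most `λ̂`, so Cauchy–Schwarz bounds all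
entries of `A = S S` and `B = T T` by `λ̂`. Writing `A - B = S (S - T) + (S - T) T`, the same
argument bounds every entry of `A - B` by `2 √λ̂ ‖S - T‖_HS`. Since the determinant is
multilinear in the rows, with `|det M| ≤ d! ∏ᵢ ‖M i‖_∞`, changing the rows one at a time gives
`|det A - det B| ≤ d! · d · λ̂^(d-1) · 2 √λ̂ ‖S - T‖_HS`, and `d ≤ d^(d/2+1)`.
-/

open Matrix

/-- The Hilbert–Schmidt (Frobenius) norm of a real matrix. -/
noncomputable def HSnorm {d : ℕ} (A : Matrix (Fin d) (Fin d) ℝ) : ℝ :=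
  Real.sqrt (∑ i, ∑ j, (A i j) ^ 2)

open scoped ComplexOrder in
/-- The square root of a positive semidefinite matrix, as defined in the older Mathlib
(`Matrix.PosSemidef.sqrt`, since removed). -/
noncomputable def Matrix.PosSemidef.sqrt {n : Type*} [Fintype n] [DecidableEq n]
    {𝕜 : Type*} [RCLike 𝕜] {A : Matrix n n 𝕜} (hA : A.PosSemidef) : Matrix n n 𝕜 :=
  hA.1.eigenvectorUnitary.1 * diagonal ((↑) ∘ (√·) ∘ hA.1.eigenvalues) *
  (star hA.1.eigenvectorUnitary : Matrix n n 𝕜)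

open Finset

namespace Matrix

variable {l m n : Type*}

theorem abs_det_le_factorial_mul_prod_norm_row [Fintype n] [DecidableEq n] (M : Matrix n n ℝ) :
    |M.det| ≤ (Fintype.card n).factorial * ∏ i, ‖M i‖ := by
  calc |M.det| = |∑ σ : Equiv.Perm n, Equiv.Perm.sign σ • ∏ i, M (σ i) i| := by rw [det_apply]
    _ ≤ ∑ σ : Equiv.Perm n, |Equiv.Perm.sign σ • ∏ i, M (σ i) i| := abs_sum_le_sum_abs _ _
    _ = ∑ σ : Equiv.Perm n, ∏ i, |M (σ i) i| := sum_congr rfl fun σ _ =>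
      (AbsoluteValue.abs.map_units_int_smul _ _).trans (abs_prod _ _)
    _ ≤ ∑ σ : Equiv.Perm n, ∏ i, ‖M (σ i)‖ := by
      gcongr with σ _ i
      exact norm_le_pi_norm (M (σ i)) i
    _ = (Fintype.card n).factorial * ∏ i, ‖M i‖ := by
      simp_rw [fun σ : Equiv.Perm n => Equiv.prod_comp σ fun i => ‖M i‖]
      simp [Fintype.card_perm]

theorem abs_det_sub_det_le [Fintype n] [DecidableEq n] (M N : Matrix n n ℝ) {K ε : ℝ}
    (hK : 0 ≤ K) (hε : 0 ≤ ε) (hM : ∀ i j, |M i j| ≤ K) (hN : ∀ i j, |N i j| ≤ K)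
    (hMN : ∀ i j, |M i j - N i j| ≤ ε) :
    |M.det - N.det| ≤
      (Fintype.card n).factorial * Fintype.card n * K ^ (Fintype.card n - 1) * ε := by
  have hnorm : ∀ (P : n → n → ℝ) {c : ℝ}, 0 ≤ c → (∀ i j, |P i j| ≤ c) → ‖P‖ ≤ c :=
    fun P c hc hP => (pi_norm_le_iff_of_nonneg hc).2 fun i =>
      (pi_norm_le_iff_of_nonneg hc).2 fun j => (Real.norm_eq_abs _).trans_le (hP i j)
  have h := (detRowAlternating (R := ℝ) (n := n)).toMultilinearMap.norm_image_sub_le_of_bound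
    (by positivity) (fun P => abs_det_le_factorial_mul_prod_norm_row P) M N
  refine (Real.norm_eq_abs _ ▸ h).trans ?_
  gcongr
  · exact (norm_nonneg _).trans (le_max_left _ _)
  · exact max_le (hnorm M hK hM) (hnorm N hK hN)
  · exact hnorm (M - N) hε hMN

theorem abs_mul_apply_le [Fintype m] (M : Matrix l m ℝ) (N : Matrix m n ℝ) (i : l) (j : n) :
    |(M * N) i j| ≤ √(∑ k, M i k ^ 2) * √(∑ k, N k j ^ 2) := by
  calc |(M * N) i j| ≤ ∑ k, |M i k| * |N k j| := by
        rw [mul_apply]; simpa only [abs_mul] using abs_sum_le_sum_abs (fun k => M i k * N k j) univ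
    _ ≤ √(∑ k, |M i k| ^ 2) * √(∑ k, |N k j| ^ 2) := Real.sum_mul_le_sqrt_mul_sqrt _ _ _
    _ = √(∑ k, M i k ^ 2) * √(∑ k, N k j ^ 2) := by simp only [sq_abs]

theorem diag_le_of_dotProduct_mulVec_le [Fintype n] [DecidableEq n] {A : Matrix n n ℝ} {c : ℝ}
    (hA : ∀ ξ : n → ℝ, ξ ⬝ᵥ A *ᵥ ξ ≤ c * ∑ i, ξ i ^ 2) (i : n) : A i i ≤ c := by
  simpa [mulVec_single_one, Pi.single_apply] using hA (Pi.single i 1)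

end Matrix

namespace Matrix.PosSemidef

open scoped ComplexOrder

variable {n 𝕜 : Type*} [Fintype n] [DecidableEq n] [RCLike 𝕜]

theorem sqrt_mul_self {A : Matrix n n 𝕜} (hA : A.PosSemidef) : hA.sqrt * hA.sqrt = A := by
  have hU : (star hA.1.eigenvectorUnitary : Matrix n n 𝕜) * hA.1.eigenvectorUnitary.1 = 1 :=
    Unitary.coe_star_mul_self _
  have hD : diagonal ((↑) ∘ (√·) ∘ hA.1.eigenvalues) * diagonal ((↑) ∘ (√·) ∘ hA.1.eigenvalues)
      = diagonal (RCLike.ofReal ∘ hA.1.eigenvalues : n → 𝕜) := by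
    rw [diagonal_mul_diagonal]
    congr 1; funext i
    simp [← RCLike.ofReal_mul, Real.mul_self_sqrt (hA.eigenvalues_nonneg i)]
  conv_rhs => rw [hA.1.spectral_theorem, Unitary.conjStarAlgAut_apply]
  rw [sqrt, ← hD]
  simp only [Matrix.mul_assoc]
  rw [← Matrix.mul_assoc (star _ : Matrix n n 𝕜), hU, Matrix.one_mul]

theorem isHermitian_sqrt {A : Matrix n n 𝕜} (hA : A.PosSemidef) : hA.sqrt.IsHermitian := by
  rw [sqrt, IsHermitian, conjTranspose_mul, conjTranspose_mul, star_eq_conjTranspose,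
    conjTranspose_conjTranspose, diagonal_conjTranspose, Matrix.mul_assoc]
  congr 3
  funext i
  simp

variable {A : Matrix n n ℝ} (hA : A.PosSemidef)
include hA

theorem sum_sq_sqrt_apply_left (i : n) : ∑ k, hA.sqrt k i ^ 2 = A i i := by
  conv_rhs => rw [← hA.sqrt_mul_self, mul_apply]
  refine sum_congr rfl fun k _ => ?_
  rw [sq, ← hA.isHermitian_sqrt.apply k i, star_trivial]

theorem sum_sq_sqrt_apply_right (i : n) : ∑ k, hA.sqrt i k ^ 2 = A i i := by
  conv_rhs => rw [← hA.sqrt_mul_self, mul_apply]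
  refine sum_congr rfl fun k _ => ?_
  rw [sq, ← hA.isHermitian_sqrt.apply k i, star_trivial]

theorem abs_apply_le {c : ℝ} (hc : ∀ i, A i i ≤ c) (i j : n) : |A i j| ≤ c := by
  calc |A i j| = |(hA.sqrt * hA.sqrt) i j| := by rw [hA.sqrt_mul_self]
    _ ≤ √(A i i) * √(A j j) := by
      simpa only [hA.sum_sq_sqrt_apply_left, hA.sum_sq_sqrt_apply_right]
        using abs_mul_apply_le hA.sqrt hA.sqrt i j
    _ ≤ √c * √c := by gcongr <;> exact hc _
    _ = c := Real.mul_self_sqrt (hA.diag_nonneg.trans (hc i))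

end Matrix.PosSemidef

section HSnorm

variable {d : ℕ}

theorem sqrt_sum_sq_row_le_HSnorm (M : Matrix (Fin d) (Fin d) ℝ) (i : Fin d) :
    √(∑ k, M i k ^ 2) ≤ HSnorm M :=
  Real.sqrt_le_sqrt <| single_le_sum (f := fun i => ∑ k, M i k ^ 2)
    (fun _ _ => by positivity) (mem_univ i)

theorem sqrt_sum_sq_col_le_HSnorm (M : Matrix (Fin d) (Fin d) ℝ) (j : Fin d) :
    √(∑ k, M k j ^ 2) ≤ HSnorm M :=
  Real.sqrt_le_sqrt <| sum_le_sum fun k _ =>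
    single_le_sum (f := fun j => M k j ^ 2) (fun _ _ => by positivity) (mem_univ j)

theorem abs_sub_apply_le_HSnorm_sqrt_sub {A B : Matrix (Fin d) (Fin d) ℝ} (hA : A.PosSemidef)
    (hB : B.PosSemidef) (i j : Fin d) :
    |A i j - B i j| ≤ (√(A i i) + √(B j j)) * HSnorm (hA.sqrt - hB.sqrt) := by
  set S := hA.sqrt
  set T := hB.sqrt
  have hsplit : A - B = S * (S - T) + (S - T) * T := by
    rw [← hA.sqrt_mul_self, ← hB.sqrt_mul_self]; noncomm_ring
  calc |A i j - B i j| ≤ |(S * (S - T)) i j| + |((S - T) * T) i j| := by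
        rw [← Matrix.sub_apply, hsplit, Matrix.add_apply]; exact abs_add_le _ _
    _ ≤ √(A i i) * HSnorm (S - T) + HSnorm (S - T) * √(B j j) := by
      gcongr
      · rw [← hA.sum_sq_sqrt_apply_right]
        exact (abs_mul_apply_le _ _ i j).trans
          (by gcongr; exact sqrt_sum_sq_col_le_HSnorm _ j)
      · rw [← hB.sum_sq_sqrt_apply_left]
        exact (abs_mul_apply_le _ _ i j).trans
          (by gcongr; exact sqrt_sum_sq_row_le_HSnorm _ i)
    _ = (√(A i i) + √(B j j)) * HSnorm (S - T) := by ring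

end HSnorm

theorem Real.pow_pred_mul_sqrt {x : ℝ} (hx : 0 ≤ x) {d : ℕ} (hd : 0 < d) :
    x ^ (d - 1) * √x = x ^ ((d : ℝ) - 1 / 2) := by
  rw [← Real.rpow_natCast, Real.sqrt_eq_rpow, ← Real.rpow_add' hx (by
    rw [Nat.cast_pred hd]; linarith [(Nat.one_le_cast (α := ℝ)).2 hd]), Nat.cast_pred hd]
  ring_nf

theorem Nat.cast_le_rpow_half_add_one (d : ℕ) : (d : ℝ) ≤ (d : ℝ) ^ ((d : ℝ) / 2 + 1) := by
  obtain rfl | hd := Nat.eq_zero_or_pos d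
  · simp
  exact Real.self_le_rpow_of_one_le (Nat.one_le_cast.2 hd)
    (by linarith [(d.cast_nonneg : (0:ℝ) ≤ d)])

theorem stmt14_general (d : ℕ) (A B : Matrix (Fin d) (Fin d) ℝ)
    (hA : A.PosSemidef) (hB : B.PosSemidef)
    (lam0 lamh L0 δ : ℝ)
    (hAq : ∀ ξ : Fin d → ℝ,
      lam0 * (∑ i, ξ i ^ 2) ≤ ξ ⬝ᵥ A.mulVec ξ ∧ ξ ⬝ᵥ A.mulVec ξ ≤ lamh * (∑ i, ξ i ^ 2))
    (hBq : ∀ ξ : Fin d → ℝ,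
      lam0 * (∑ i, ξ i ^ 2) ≤ ξ ⬝ᵥ B.mulVec ξ ∧ ξ ⬝ᵥ B.mulVec ξ ≤ lamh * (∑ i, ξ i ^ 2))
    (hsqrt : HSnorm (hA.sqrt - hB.sqrt) ≤ L0 * δ) :
    |A.det - B.det| ≤ 2 * (d:ℝ) ^ ((d:ℝ)/2 + 1) * (Nat.factorial d) *
      lamh ^ ((d:ℝ) - 1/2) * L0 * δ := by
  obtain rfl | hd := Nat.eq_zero_or_pos d
  · simp
  have hAdiag : ∀ i, A i i ≤ lamh := diag_le_of_dotProduct_mulVec_le fun ξ => (hAq ξ).2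
  have hBdiag : ∀ i, B i i ≤ lamh := diag_le_of_dotProduct_mulVec_le fun ξ => (hBq ξ).2
  have hlamh : 0 ≤ lamh := hA.diag_nonneg.trans (hAdiag ⟨0, hd⟩)
  set ε := HSnorm (hA.sqrt - hB.sqrt)
  have hε : 0 ≤ ε := Real.sqrt_nonneg _
  have hAB : ∀ i j, |A i j - B i j| ≤ 2 * √lamh * ε := fun i j =>
    (abs_sub_apply_le_HSnorm_sqrt_sub hA hB i j).trans <| by
      gcongr
      linarith [Real.sqrt_le_sqrt (hAdiag i), Real.sqrt_le_sqrt (hBdiag j)]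
  have hdet := abs_det_sub_det_le A B hlamh (by positivity) (hA.abs_apply_le hAdiag)
    (hB.abs_apply_le hBdiag) hAB
  rw [Fintype.card_fin] at hdet
  calc |A.det - B.det| ≤ d.factorial * d * lamh ^ (d - 1) * (2 * √lamh * ε) := hdet
    _ = 2 * d * d.factorial * (lamh ^ (d - 1) * √lamh) * ε := by ring
    _ ≤ 2 * (d:ℝ) ^ ((d:ℝ)/2 + 1) * d.factorial * lamh ^ ((d:ℝ) - 1/2) * (L0 * δ) := by
      rw [Real.pow_pred_mul_sqrt hlamh hd]
      gcongr
      exact Nat.cast_le_rpow_half_add_one d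
    _ = _ := by ring

theorem stmt14 (d : ℕ) (A B : Matrix (Fin d) (Fin d) ℝ)
    (hA : A.PosSemidef) (hB : B.PosSemidef)
    (lam0 lamh L0 δ : ℝ) (hlam0 : 0 < lam0) (hle : lam0 ≤ lamh)
    (hL0 : 0 ≤ L0) (hδ : 0 ≤ δ)
    (hAq : ∀ ξ : Fin d → ℝ,
      lam0 * (∑ i, ξ i ^ 2) ≤ ξ ⬝ᵥ A.mulVec ξ ∧ ξ ⬝ᵥ A.mulVec ξ ≤ lamh * (∑ i, ξ i ^ 2))
    (hBq : ∀ ξ : Fin d → ℝ,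
      lam0 * (∑ i, ξ i ^ 2) ≤ ξ ⬝ᵥ B.mulVec ξ ∧ ξ ⬝ᵥ B.mulVec ξ ≤ lamh * (∑ i, ξ i ^ 2))
    (hsqrt : HSnorm (hA.sqrt - hB.sqrt) ≤ L0 * δ) :
    |A.det - B.det| ≤ 2 * (d:ℝ) ^ ((d:ℝ)/2 + 1) * (Nat.factorial d) *
      lamh ^ ((d:ℝ) - 1/2) * L0 * δ :=
  stmt14_general d A B hA hB lam0 lamh L0 δ hAq hBq hsqrt
end

section
/- Khasminskii's lemma (abstract form): Let (A_t) be a nonnegative nondecreasing adapted process with A₀ = 0 such that E(A_t − A_s | F_s) ≤ ½ whenever 0 ≤ s ≤ t ≤ T and t − s ≤ δ₀ for some δ₀ > 0. If moreover all conditional moments satisfy E((A_t − A_s)^k | F_s) ≤ k! 2^{−k} for such s, t, then E exp(A_T) ≤ 2^{1 + T/δ₀}. -/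
/-!
Write `A_t = A_s + Δ` with `Δ = A_t - A_s ≥ 0`. Expanding `exp Δ` as a power series and pulling
the `F_s`-measurable factor `exp A_s` out of the conditional expectation, the moment bounds give
`E exp A_t ≤ ∑ₖ 2⁻ᵏ E exp A_s = 2 E exp A_s` whenever `t - s ≤ δ₀`. Iterating over the
`⌈T/δ₀⌉` steps of a uniform grid of `[0, T]` gives `E exp A_T ≤ 2^⌈T/δ₀⌉ ≤ 2^(1 + T/δ₀)`.
-/

open MeasureTheory Real Nat

lemma Real.hasSum_pow_div_factorial (x : ℝ) : HasSum (fun k : ℕ => x ^ k / k !) (exp x) := by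
  rw [exp_eq_exp_ℝ]
  exact NormedSpace.expSeries_div_hasSum_exp x

lemma Real.pow_le_factorial_mul_exp {x : ℝ} (hx : 0 ≤ x) (k : ℕ) : x ^ k ≤ k ! * exp x := by
  have := pow_div_factorial_le_exp x hx k
  rwa [div_le_iff₀ (by positivity), mul_comm] at this

section

variable {Ω : Type*} {m m0 : MeasurableSpace Ω} {μ : Measure Ω}

lemma MeasureTheory.Integrable.mul_pow_of_mul_exp {Z X : Ω → ℝ} (hZ0 : 0 ≤ Z) (hX0 : 0 ≤ X)
    (hZ : AEStronglyMeasurable Z μ) (hX : AEStronglyMeasurable X μ)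
    (h : Integrable (fun ω => Z ω * exp (X ω)) μ) (k : ℕ) :
    Integrable (fun ω => Z ω * X ω ^ k) μ := by
  refine (h.const_mul (k ! : ℝ)).mono' (hZ.mul (hX.pow k)) (ae_of_all _ fun ω => ?_)
  rw [norm_of_nonneg (mul_nonneg (hZ0 ω) (pow_nonneg (hX0 ω) k)), mul_left_comm]
  exact mul_le_mul_of_nonneg_left (pow_le_factorial_mul_exp (hX0 ω) k) (hZ0 ω)

lemma integral_mul_le_of_condExp_le (hm : m ≤ m0) [SigmaFinite (μ.trim hm)] {Y g : Ω → ℝ}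
    {b : ℝ} (hY : StronglyMeasurable[m] Y) (hY0 : 0 ≤ᵐ[μ] Y) (hYint : Integrable Y μ)
    (hg : Integrable g μ) (hYg : Integrable (Y * g) μ) (hb : μ[g | m] ≤ᵐ[μ] fun _ => b) :
    ∫ ω, Y ω * g ω ∂μ ≤ b * ∫ ω, Y ω ∂μ := by
  have hpull := condExp_mul_of_stronglyMeasurable_left hY hYg hg
  calc ∫ ω, Y ω * g ω ∂μ = ∫ ω, Y ω * (μ[g | m]) ω ∂μ := by
        rw [← integral_condExp hm]
        exact integral_congr_ae hpull
    _ ≤ ∫ ω, Y ω * b ∂μ := by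
        refine integral_mono_ae (integrable_condExp.congr hpull) (hYint.mul_const b) ?_
        filter_upwards [hY0, hb] with ω h0 h
        exact mul_le_mul_of_nonneg_left h h0
    _ = b * ∫ ω, Y ω ∂μ := by rw [integral_mul_const, mul_comm]

lemma integral_mul_exp_le_of_integral_mul_pow_le {Y X : Ω → ℝ} {c : ℝ} (hc0 : 0 ≤ c) (hc1 : c < 1)
    (hY0 : 0 ≤ Y) (hX0 : 0 ≤ X) (hY : AEStronglyMeasurable Y μ) (hX : AEStronglyMeasurable X μ)
    (hint : Integrable (fun ω => Y ω * exp (X ω)) μ)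
    (hmom : ∀ k : ℕ, ∫ ω, Y ω * X ω ^ k ∂μ ≤ k ! * c ^ k * ∫ ω, Y ω ∂μ) :
    ∫ ω, Y ω * exp (X ω) ∂μ ≤ (1 - c)⁻¹ * ∫ ω, Y ω ∂μ := by
  set F : ℕ → Ω → ℝ := fun k ω => Y ω * X ω ^ k / (k ! : ℝ)
  have hF0 : ∀ k ω, 0 ≤ F k ω := fun k ω =>
    div_nonneg (mul_nonneg (hY0 ω) (pow_nonneg (hX0 ω) k)) (by positivity)
  have hF_int : ∀ k, Integrable (F k) μ := fun k =>
    (hint.mul_pow_of_mul_exp hY0 hX0 hY hX k).div_const _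
  have hF_le : ∀ k, ∫ ω, F k ω ∂μ ≤ c ^ k * ∫ ω, Y ω ∂μ := fun k => by
    rw [integral_div, div_le_iff₀ (by positivity)]
    linarith [hmom k]
  have hgeom := (hasSum_geometric_of_lt_one hc0 hc1).mul_right (∫ ω, Y ω ∂μ)
  have hF_sum : Summable fun k => ∫ ω, ‖F k ω‖ ∂μ := by
    simp_rw [norm_of_nonneg (hF0 _ _)]
    exact hgeom.summable.of_nonneg_of_le (fun k => integral_nonneg (hF0 k)) hF_le
  have hsum := hasSum_integral_of_summable_integral_norm hF_int hF_sum
  have hF_tsum : ∀ ω, ∑' k, F k ω = Y ω * exp (X ω) := fun ω => by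
    simp_rw [F, mul_div_assoc]
    exact ((hasSum_pow_div_factorial (X ω)).mul_left (Y ω)).tsum_eq
  simp_rw [hF_tsum] at hsum
  exact hasSum_le hF_le hsum hgeom

lemma integral_mul_exp_le_of_condExp_pow_le (hm : m ≤ m0) [SigmaFinite (μ.trim hm)]
    {Y X : Ω → ℝ} {c : ℝ} (hc0 : 0 ≤ c) (hc1 : c < 1) (hY0 : 0 ≤ Y) (hX0 : 0 ≤ X)
    (hY : StronglyMeasurable[m] Y) (hX : AEStronglyMeasurable X μ)
    (hint : Integrable (fun ω => Y ω * exp (X ω)) μ) (hexp : Integrable (fun ω => exp (X ω)) μ)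
    (hmom : ∀ k : ℕ, μ[fun ω => X ω ^ k | m] ≤ᵐ[μ] fun _ => (k ! : ℝ) * c ^ k) :
    ∫ ω, Y ω * exp (X ω) ∂μ ≤ (1 - c)⁻¹ * ∫ ω, Y ω ∂μ := by
  have hY' : AEStronglyMeasurable Y μ := (hY.mono hm).aestronglyMeasurable
  have hYX := hint.mul_pow_of_mul_exp hY0 hX0 hY' hX
  have hXk : ∀ k, Integrable (fun ω => X ω ^ k) μ := fun k => by
    simpa using (hexp.const_mul 1).mul_pow_of_mul_exp (fun _ => zero_le_one) hX0
      aestronglyMeasurable_const hX k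
  refine integral_mul_exp_le_of_integral_mul_pow_le hc0 hc1 hY0 hX0 hY' hX hint fun k => ?_
  exact integral_mul_le_of_condExp_le hm hY (ae_of_all _ hY0) (by simpa using hYX 0) (hXk k)
    (hYX k) (hmom k)

end

lemma le_rpow_of_le_mul_of_sub_le {f : ℝ → ℝ} {a T δ : ℝ} (ha : 1 ≤ a) (hT : 0 < T) (hδ : 0 < δ)
    (h0 : f 0 ≤ 1) (hstep : ∀ s t, 0 ≤ s → s ≤ t → t ≤ T → t - s ≤ δ → f t ≤ a * f s) :
    f T ≤ a ^ (1 + T / δ) := by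
  set n := ⌈T / δ⌉₊
  have hn : (0 : ℝ) < n := by exact_mod_cast Nat.ceil_pos.2 (div_pos hT hδ)
  set h := T / n
  have hnh : n * h = T := mul_div_cancel₀ T hn.ne'
  have hh : 0 ≤ h := by positivity
  have hhδ : h ≤ δ := by
    have := Nat.le_ceil (T / δ)
    rw [div_le_iff₀ hδ] at this
    rw [div_le_iff₀ hn]
    linarith
  have hgrid : ∀ i ≤ n, f (i * h) ≤ a ^ i := by
    intro i
    induction i with
    | zero => simpa using h0
    | succ i ih =>
      intro hi
      have hin : ((i + 1 : ℕ) : ℝ) ≤ n := by exact_mod_cast hi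
      push_cast at hin ⊢
      calc f ((i + 1) * h) ≤ a * f (i * h) :=
            hstep _ _ (by positivity) (by nlinarith) (by nlinarith) (by nlinarith)
        _ ≤ a * a ^ i := mul_le_mul_of_nonneg_left (ih (by omega)) (by linarith)
        _ = a ^ (i + 1) := by ring
  calc f T = f (n * h) := by rw [hnh]
    _ ≤ a ^ n := hgrid n le_rfl
    _ = a ^ (n : ℝ) := (rpow_natCast a n).symm
    _ ≤ a ^ (1 + T / δ) :=
        rpow_le_rpow_of_exponent_le ha (by linarith [Nat.ceil_lt_add_one (div_pos hT hδ).le])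

theorem stmt17_general {Ω : Type*} {m0 : MeasurableSpace Ω} (μ : Measure Ω)
    [IsProbabilityMeasure μ] (F : Filtration ℝ m0)
    (T δ0 : ℝ) (hT : 0 < T) (hδ0 : 0 < δ0)
    (A : ℝ → Ω → ℝ)
    (hA0 : ∀ ω, A 0 ω = 0)
    (hpos : ∀ t ω, 0 ≤ A t ω)
    (hmono : ∀ s t : ℝ, s ≤ t → ∀ ω, A s ω ≤ A t ω)
    (hadapted : Adapted F A)
    (hk : ∀ s t : ℝ, 0 ≤ s → s ≤ t → t ≤ T → t - s ≤ δ0 → ∀ k : ℕ,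
      μ[fun ω => (A t ω - A s ω) ^ k | F s] ≤ᵐ[μ]
        fun _ => (Nat.factorial k : ℝ) * (2⁻¹ : ℝ) ^ k) :
    ∫ ω, Real.exp (A T ω) ∂μ ≤ (2:ℝ) ^ (1 + T/δ0) := by
  by_cases hint : Integrable (fun ω => exp (A T ω)) μ
  swap
  · rw [integral_undef hint]
    positivity
  have hmeas : ∀ t, StronglyMeasurable (A t) := fun t =>
    ((hadapted t).mono (F.le t) le_rfl).stronglyMeasurable
  have hint_of_le : ∀ u : Ω → ℝ, AEStronglyMeasurable u μ → (∀ ω, u ω ≤ A T ω) →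
      Integrable (fun ω => exp (u ω)) μ := fun u hu hle =>
    hint.mono' (continuous_exp.comp_aestronglyMeasurable hu) (ae_of_all _ fun ω => by
      rw [norm_of_nonneg (exp_pos _).le]
      exact exp_le_exp.2 (hle ω))
  refine le_rpow_of_le_mul_of_sub_le (f := fun t => ∫ ω, exp (A t ω) ∂μ) one_le_two hT hδ0
    (by simp [hA0]) fun s t hs hst htT hts => ?_
  have hsplit : ∀ ω, exp (A s ω) * exp (A t ω - A s ω) = exp (A t ω) := fun ω => by
    rw [← exp_add, add_sub_cancel]
  have hint_t : Integrable (fun ω => exp (A s ω) * exp (A t ω - A s ω)) μ := by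
    simpa only [hsplit] using hint_of_le _ (hmeas t).aestronglyMeasurable (hmono t T htT)
  have hint_incr : Integrable (fun ω => exp (A t ω - A s ω)) μ :=
    hint_of_le _ ((hmeas t).sub (hmeas s)).aestronglyMeasurable
      fun ω => by linarith [hpos s ω, hmono t T htT ω]
  have key := integral_mul_exp_le_of_condExp_pow_le (F.le s) (by norm_num : (0 : ℝ) ≤ 2⁻¹)
    (by norm_num) (fun ω => (exp_pos (A s ω)).le) (fun ω => sub_nonneg.2 (hmono s t hst ω))
    (continuous_exp.comp_stronglyMeasurable (hadapted s).stronglyMeasurable)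
    ((hmeas t).sub (hmeas s)).aestronglyMeasurable hint_t hint_incr (hk s t hs hst htT hts)
  simp only [hsplit] at key
  norm_num at key
  exact key

theorem stmt17 {Ω : Type*} {m0 : MeasurableSpace Ω} (μ : Measure Ω)
    [IsProbabilityMeasure μ] (F : Filtration ℝ m0)
    (T δ0 : ℝ) (hT : 0 < T) (hδ0 : 0 < δ0)
    (A : ℝ → Ω → ℝ)
    (hA0 : ∀ ω, A 0 ω = 0)
    (hpos : ∀ t ω, 0 ≤ A t ω)
    (hmono : ∀ s t : ℝ, s ≤ t → ∀ ω, A s ω ≤ A t ω)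
    (hadapted : Adapted F A)
    (h1 : ∀ s t : ℝ, 0 ≤ s → s ≤ t → t ≤ T → t - s ≤ δ0 →
      μ[fun ω => A t ω - A s ω | F s] ≤ᵐ[μ] fun _ => (1/2 : ℝ))
    (hk : ∀ s t : ℝ, 0 ≤ s → s ≤ t → t ≤ T → t - s ≤ δ0 → ∀ k : ℕ,
      μ[fun ω => (A t ω - A s ω) ^ k | F s] ≤ᵐ[μ]
        fun _ => (Nat.factorial k : ℝ) * (2⁻¹ : ℝ) ^ k) :
    ∫ ω, Real.exp (A T ω) ∂μ ≤ (2:ℝ) ^ (1 + T/δ0) :=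
  stmt17_general μ F T δ0 hT hδ0 A hA0 hpos hmono hadapted hk
end

section
/- If b ∈ W^{θ,p}(ℝ^d) with p > max(2, d) and θ > 0 (i.e., the Gagliardo seminorm [b]_{W^{p,θ}} is finite), then b belongs to the Gaussian–Besov class GB²_{1−d/p, θ}(ℝ^d): there is a constant C > 0 with (rs)^{−d/2} ∫∫ |b(x)−b(y)|² e^{−|x−z|²/s} e^{−|y−x|²/r} dy dx ≤ C [b]_{W^{p,θ}}^{2/p} s^{−d/p} r^θ for all r, s > 0 and z ∈ ℝ^d. -/
/-!
Write `G(x,y) = |b(x) - b(y)|^p / |x - y|^(d + pθ)`. The integrand factors as `G^(2/p) · h` with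
`h(x,y) = |x - y|^(2(d + pθ)/p) e^(-|x-z|²/s) e^(-|y-x|²/r)`, so Hölder's inequality with exponents
`p/2` and `p/(p-2)` bounds the integral by `(∫ G)^(2/p) (∫ h^(p/(p-2)))^((p-2)/p)`. As
`p/(p-2) ≥ 1`, raising the Gaussian factors to that power only decreases them, and the shear
`(x, y) ↦ (x, y - x)` splits the remaining integral into a Gaussian in `x`, of size `s^(d/2)`, times
a Gaussian moment of order `a = 2(d + pθ)/(p-2)` in `y - x`, of size `r^((d+a)/2)`. The powers of
`r` and `s` then combine to `s^(-d/p) r^θ`.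
-/

open MeasureTheory Real Module
open scoped ENNReal

theorem sq_eq_rpow_div_rpow_rpow_mul_rpow {u D p e : ℝ} (hu : 0 ≤ u) (hD : 0 ≤ D) (hp : 0 < p)
    (hDu : D = 0 → u = 0) : u ^ 2 = (u ^ p / D ^ e) ^ (2 / p) * D ^ (2 * e / p) := by
  rcases hD.eq_or_lt with rfl | hD
  · rw [hDu rfl, zero_rpow hp.ne', zero_div, zero_rpow (by positivity)]
    ring
  rw [div_rpow (by positivity) (by positivity), ← rpow_mul hu, ← rpow_mul hD.le,
    mul_div_cancel₀ _ hp.ne', rpow_two, show e * (2 / p) = 2 * e / p by ring,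
    div_mul_cancel₀ _ (rpow_pos_of_pos hD _).ne']

theorem exp_rpow_le_exp {t q : ℝ} (ht : t ≤ 0) (hq : 1 ≤ q) : exp t ^ q ≤ exp t := by
  rw [← exp_mul]
  exact exp_le_exp.2 (by nlinarith)

theorem rpow_mul_exp_mul_exp_rpow_le {D c t₁ t₂ q : ℝ} (hD : 0 ≤ D) (ht₁ : t₁ ≤ 0) (ht₂ : t₂ ≤ 0)
    (hq : 1 ≤ q) : (D ^ c * (exp t₁ * exp t₂)) ^ q ≤ exp t₁ * (D ^ (c * q) * exp t₂) := by
  rw [mul_rpow (by positivity) (by positivity), mul_rpow (by positivity) (by positivity),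
    ← rpow_mul hD]
  calc _ ≤ D ^ (c * q) * (exp t₁ * exp t₂) := by
        gcongr
        exacts [exp_rpow_le_exp ht₁ hq, exp_rpow_le_exp ht₂ hq]
    _ = _ := by ring

theorem rpow_mul_exp_neg_sq_div_two_le {a t : ℝ} (ha : 0 ≤ a) (ht : 0 ≤ t) :
    t ^ a * exp (-t ^ 2 / 2) ≤ exp (a ^ 2 / 2) := by
  have ht_le : t ^ a ≤ exp (a * t) := by
    rw [mul_comm, exp_mul]
    exact rpow_le_rpow ht ((le_add_of_nonneg_right zero_le_one).trans (add_one_le_exp t)) ha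
  calc t ^ a * exp (-t ^ 2 / 2) ≤ exp (a * t) * exp (-t ^ 2 / 2) := by gcongr
    _ = exp (a * t - t ^ 2 / 2) := by rw [← exp_add]; ring_nf
    _ ≤ exp (a ^ 2 / 2) := exp_le_exp.2 (by nlinarith [sq_nonneg (t - a)])

theorem rpow_norm_mul_exp_neg_sq_norm_div_eq {V : Type*} [NormedAddCommGroup V] [NormedSpace ℝ V]
    {a r : ℝ} (hr : 0 < r) (w : V) :
    ‖w‖ ^ a * exp (-‖w‖ ^ 2 / r) =
      r ^ (a / 2) * (‖(√r)⁻¹ • w‖ ^ a * exp (-‖(√r)⁻¹ • w‖ ^ 2)) := by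
  have hR : 0 < √r := sqrt_pos.2 hr
  rw [norm_smul, norm_inv, norm_of_nonneg hR.le, mul_pow, inv_pow, sq_sqrt hr.le,
    mul_rpow (inv_nonneg.2 hR.le) (norm_nonneg w), inv_rpow hR.le, sqrt_eq_rpow,
    ← rpow_mul hr.le, mul_comm (1 / 2) a, ← div_eq_mul_one_div]
  field_simp

theorem exists_pos_le_mul_of_eq_zero {A B : ℝ} (hB : 0 ≤ B) (hAB : B = 0 → A ≤ 0) :
    ∃ C > 0, A ≤ C * B := by
  rcases hB.eq_or_lt with rfl | hB
  · exact ⟨1, one_pos, by simpa using hAB rfl⟩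
  · refine ⟨(|A| + 1) / B, by positivity, ?_⟩
    rw [div_mul_cancel₀ _ hB.ne']
    linarith [le_abs_self A]

theorem ENNReal.lintegral_rpow_inv_mul_le {α : Type*} [MeasurableSpace α] (μ : Measure α)
    {q q' : ℝ} (hqq' : q.HolderConjugate q') {f g : α → ℝ≥0∞} (hf : AEMeasurable f μ)
    (hg : AEMeasurable g μ) :
    ∫⁻ x, f x ^ q⁻¹ * g x ∂μ ≤ (∫⁻ x, f x ∂μ) ^ q⁻¹ * (∫⁻ x, g x ^ q' ∂μ) ^ q'⁻¹ := by
  have h := ENNReal.lintegral_mul_le_Lp_mul_Lq μ hqq' (hf.pow_const q⁻¹) hg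
  simp_rw [← ENNReal.rpow_mul, inv_mul_cancel₀ hqq'.ne_zero, ENNReal.rpow_one, one_div] at h
  exact h

theorem lintegral_prod_mul_comp_sub {G : Type*} [MeasurableSpace G] [AddGroup G]
    [MeasurableAdd₂ G] [MeasurableNeg G] (μ ν : Measure G) [SFinite μ] [SFinite ν]
    [ν.IsAddRightInvariant] {f g : G → ℝ≥0∞} (hf : AEMeasurable f μ) (hg : AEMeasurable g ν) :
    ∫⁻ z, f z.1 * g (z.2 - z.1) ∂μ.prod ν = (∫⁻ x, f x ∂μ) * ∫⁻ y, g y ∂ν := by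
  rw [← lintegral_prod_mul hf hg]
  exact (measurePreserving_prod_sub μ ν).lintegral_comp_emb
    (MeasurableEquiv.shearSubRight G).measurableEmbedding (fun z => f z.1 * g z.2)

theorem lintegral_sq_mul_exp_mul_exp_le {V F : Type*} [NormedAddCommGroup V] [NormedSpace ℝ V]
    [FiniteDimensional ℝ V] [MeasurableSpace V] [BorelSpace V] [SeminormedAddCommGroup F]
    (μ : Measure V) [μ.IsAddHaarMeasure] {p e r s : ℝ} (hp : 2 < p) (hr : 0 ≤ r) (hs : 0 ≤ s)
    (z : V) {b : V → F}
    (hG : AEMeasurable (fun q : V × V => ‖b q.1 - b q.2‖ ^ p / ‖q.1 - q.2‖ ^ e) (μ.prod μ)) :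
    ∫⁻ q, ENNReal.ofReal (‖b q.1 - b q.2‖ ^ 2 * exp (-‖q.1 - z‖ ^ 2 / s) *
        exp (-‖q.2 - q.1‖ ^ 2 / r)) ∂μ.prod μ ≤
      (∫⁻ q, ENNReal.ofReal (‖b q.1 - b q.2‖ ^ p / ‖q.1 - q.2‖ ^ e) ∂μ.prod μ) ^ (2 / p) *
        ((∫⁻ x, ENNReal.ofReal (exp (-‖x - z‖ ^ 2 / s)) ∂μ) *
          ∫⁻ w, ENNReal.ofReal (‖w‖ ^ (2 * e / (p - 2)) * exp (-‖w‖ ^ 2 / r)) ∂μ)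
          ^ ((p - 2) / p) := by
  have hp0 : 0 < p := by linarith
  have hp2 : 0 < p - 2 := by linarith
  have hconj : (p / 2).HolderConjugate (p / (p - 2)) :=
    (Real.holderConjugate_iff).2 ⟨by linarith, by field_simp; ring⟩
  set weight : V × V → ℝ := fun q =>
    ‖q.1 - q.2‖ ^ (2 * e / p) * (exp (-‖q.1 - z‖ ^ 2 / s) * exp (-‖q.2 - q.1‖ ^ 2 / r))
  have hweight : Measurable weight := by fun_prop
  have hfactor : ∀ q : V × V, ENNReal.ofReal (‖b q.1 - b q.2‖ ^ 2 * exp (-‖q.1 - z‖ ^ 2 / s) *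
      exp (-‖q.2 - q.1‖ ^ 2 / r)) = ENNReal.ofReal (‖b q.1 - b q.2‖ ^ p / ‖q.1 - q.2‖ ^ e)
        ^ (p / 2)⁻¹ * ENNReal.ofReal (weight q) := by
    intro q
    rw [inv_div, ENNReal.ofReal_rpow_of_nonneg (by positivity) (by positivity),
      ← ENNReal.ofReal_mul (by positivity),
      sq_eq_rpow_div_rpow_rpow_mul_rpow (e := e) (norm_nonneg _) (norm_nonneg (q.1 - q.2)) hp0
        (fun h => by rw [norm_sub_eq_zero_iff.1 h, sub_self, norm_zero])]
    simp only [weight]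
    ring_nf
  have hweight_le : ∀ q : V × V, ENNReal.ofReal (weight q) ^ (p / (p - 2)) ≤
      ENNReal.ofReal (exp (-‖q.1 - z‖ ^ 2 / s)) *
        ENNReal.ofReal (‖q.2 - q.1‖ ^ (2 * e / (p - 2)) * exp (-‖q.2 - q.1‖ ^ 2 / r)) := by
    intro q
    have hq : 1 ≤ p / (p - 2) := (one_le_div hp2).2 (by linarith)
    have hnonpos : ∀ {u t : ℝ}, 0 ≤ t → -u ^ 2 / t ≤ 0 := fun ht =>
      div_nonpos_of_nonpos_of_nonneg (neg_nonpos.2 (sq_nonneg _)) ht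
    rw [ENNReal.ofReal_rpow_of_nonneg (by positivity) (by positivity),
      ← ENNReal.ofReal_mul (by positivity),
      show 2 * e / (p - 2) = 2 * e / p * (p / (p - 2)) by field_simp]
    refine ENNReal.ofReal_le_ofReal ((rpow_mul_exp_mul_exp_rpow_le (norm_nonneg _)
      (hnonpos hs) (hnonpos hr) hq).trans_eq ?_)
    rw [norm_sub_rev q.1 q.2]
  calc _ = ∫⁻ q, ENNReal.ofReal (‖b q.1 - b q.2‖ ^ p / ‖q.1 - q.2‖ ^ e) ^ (p / 2)⁻¹ *
        ENNReal.ofReal (weight q) ∂μ.prod μ := lintegral_congr hfactor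
    _ ≤ _ := ENNReal.lintegral_rpow_inv_mul_le _ hconj hG.ennreal_ofReal
        hweight.ennreal_ofReal.aemeasurable
    _ ≤ _ := by
      rw [inv_div, inv_div, ← lintegral_prod_mul_comp_sub μ μ (by fun_prop) (by fun_prop)]
      gcongr with q
      exact hweight_le q

section Gaussian

variable {V : Type*} [NormedAddCommGroup V] [InnerProductSpace ℝ V] [FiniteDimensional ℝ V]
  [MeasurableSpace V] [BorelSpace V]

theorem integrable_exp_neg_mul_sq_norm {c : ℝ} (hc : 0 < c) :
    Integrable (fun v : V => exp (-c * ‖v‖ ^ 2)) := by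
  refine (GaussianFourier.integrable_cexp_neg_mul_sq_norm_add (V := V) (b := c)
    (by simpa using hc) 0 0).norm.congr (.of_forall fun v => ?_)
  simp only [Complex.norm_exp, inner_zero_left, Complex.ofReal_zero,
    mul_zero, add_zero]
  norm_cast

theorem integrable_exp_neg_sq_norm_sub_div {s : ℝ} (hs : 0 < s) (z : V) :
    Integrable (fun x : V => exp (-‖x - z‖ ^ 2 / s)) := by
  simpa [neg_div, div_eq_inv_mul] using
    (integrable_exp_neg_mul_sq_norm (V := V) (inv_pos.2 hs)).comp_sub_right z

theorem integral_exp_neg_sq_norm_sub_div {s : ℝ} (hs : 0 < s) (z : V) :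
    ∫ x : V, exp (-‖x - z‖ ^ 2 / s) = (π * s) ^ ((finrank ℝ V : ℝ) / 2) := by
  simp_rw [neg_div, div_eq_inv_mul, ← neg_mul]
  rw [integral_sub_right_eq_self (fun x : V => exp (-s⁻¹ * ‖x‖ ^ 2)) z,
    GaussianFourier.integral_rexp_neg_mul_sq_norm (inv_pos.2 hs), div_inv_eq_mul]
  ring_nf

theorem integrable_rpow_norm_mul_exp_neg_sq_norm {a : ℝ} (ha : 0 ≤ a) :
    Integrable (fun u : V => ‖u‖ ^ a * exp (-‖u‖ ^ 2)) := by
  refine ((integrable_exp_neg_mul_sq_norm (V := V) one_half_pos).const_mul (exp (a ^ 2 / 2))).mono'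
    (by fun_prop) (.of_forall fun u => ?_)
  have hsplit : exp (-‖u‖ ^ 2) = exp (-‖u‖ ^ 2 / 2) * exp (-(1 / 2) * ‖u‖ ^ 2) := by
    rw [← exp_add]; ring_nf
  rw [norm_of_nonneg (by positivity), hsplit, ← mul_assoc]
  gcongr
  exact rpow_mul_exp_neg_sq_div_two_le ha (norm_nonneg u)

theorem integrable_rpow_norm_mul_exp_neg_sq_norm_div {a r : ℝ} (ha : 0 ≤ a) (hr : 0 < r) :
    Integrable (fun w : V => ‖w‖ ^ a * exp (-‖w‖ ^ 2 / r)) := by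
  have hR : (√r)⁻¹ ≠ 0 := inv_ne_zero (sqrt_pos.2 hr).ne'
  exact (((integrable_rpow_norm_mul_exp_neg_sq_norm ha).comp_smul hR).const_mul
    (r ^ (a / 2))).congr (.of_forall fun w => (rpow_norm_mul_exp_neg_sq_norm_div_eq hr w).symm)

theorem integral_rpow_norm_mul_exp_neg_sq_norm_div {a r : ℝ} (hr : 0 < r) :
    ∫ w : V, ‖w‖ ^ a * exp (-‖w‖ ^ 2 / r) =
      r ^ (((finrank ℝ V : ℝ) + a) / 2) * ∫ u : V, ‖u‖ ^ a * exp (-‖u‖ ^ 2) := by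
  have hR : 0 ≤ √r := sqrt_nonneg r
  have hsqrt_pow : √r ^ finrank ℝ V = r ^ ((finrank ℝ V : ℝ) / 2) := by
    rw [← rpow_natCast, sqrt_eq_rpow, ← rpow_mul hr.le]; ring_nf
  simp_rw [rpow_norm_mul_exp_neg_sq_norm_div_eq hr]
  rw [integral_const_mul, Measure.integral_comp_inv_smul_of_nonneg volume
    (fun u : V => ‖u‖ ^ a * exp (-‖u‖ ^ 2)) hR, smul_eq_mul, hsqrt_pow, ← mul_assoc,
    ← rpow_add hr]
  ring_nf

variable {F : Type*} [SeminormedAddCommGroup F]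

theorem integral_sq_mul_exp_mul_exp_le {p e r s : ℝ} (hp : 2 < p) (he : 0 ≤ e) (hr : 0 < r)
    (hs : 0 < s) (z : V) {b : V → F}
    (hb : Integrable (fun q : V × V => ‖b q.1 - b q.2‖ ^ p / ‖q.1 - q.2‖ ^ e)) :
    ∫ q : V × V, ‖b q.1 - b q.2‖ ^ 2 * exp (-‖q.1 - z‖ ^ 2 / s) * exp (-‖q.2 - q.1‖ ^ 2 / r) ≤
      (∫ q : V × V, ‖b q.1 - b q.2‖ ^ p / ‖q.1 - q.2‖ ^ e) ^ (2 / p) *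
        ((π * s) ^ ((finrank ℝ V : ℝ) / 2) * (r ^ (((finrank ℝ V : ℝ) + 2 * e / (p - 2)) / 2) *
          ∫ u : V, ‖u‖ ^ (2 * e / (p - 2)) * exp (-‖u‖ ^ 2))) ^ ((p - 2) / p) := by
  have hcore := lintegral_sq_mul_exp_mul_exp_le volume hp hr.le hs.le z hb.aemeasurable
  rw [← Measure.volume_eq_prod,
    ← ofReal_integral_eq_lintegral_ofReal hb (.of_forall fun q => by positivity),
    ← ofReal_integral_eq_lintegral_ofReal (integrable_exp_neg_sq_norm_sub_div hs z)
      (.of_forall fun x => by positivity),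
    ← ofReal_integral_eq_lintegral_ofReal
      (integrable_rpow_norm_mul_exp_neg_sq_norm_div (by positivity) hr)
      (.of_forall fun w => by positivity),
    integral_exp_neg_sq_norm_sub_div hs, integral_rpow_norm_mul_exp_neg_sq_norm_div hr,
    ← ENNReal.ofReal_mul (by positivity),
    ENNReal.ofReal_rpow_of_nonneg (by positivity) (by positivity),
    ENNReal.ofReal_rpow_of_nonneg (by positivity) (by positivity),
    ← ENNReal.ofReal_mul (by positivity)] at hcore
  refine (Real.le_norm_self _).trans ((norm_integral_le_lintegral_norm _).trans ?_)
  refine ENNReal.toReal_le_of_le_ofReal (by positivity) ?_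
  exact (lintegral_congr fun q => by rw [norm_of_nonneg (by positivity)]).trans_le hcore

theorem rpow_mul_integral_sq_mul_exp_mul_exp_le {p θ r s : ℝ} (hp : 2 < p) (hθ : 0 ≤ θ)
    (hr : 0 < r) (hs : 0 < s) (z : V) {b : V → F}
    (hb : Integrable (fun q : V × V =>
      ‖b q.1 - b q.2‖ ^ p / ‖q.1 - q.2‖ ^ ((finrank ℝ V : ℝ) + p * θ))) :
    (r * s) ^ (-(finrank ℝ V : ℝ) / 2) * ∫ q : V × V,
        ‖b q.1 - b q.2‖ ^ 2 * exp (-‖q.1 - z‖ ^ 2 / s) * exp (-‖q.2 - q.1‖ ^ 2 / r) ≤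
      (π ^ ((finrank ℝ V : ℝ) / 2) *
          ∫ u : V, ‖u‖ ^ (2 * ((finrank ℝ V : ℝ) + p * θ) / (p - 2)) * exp (-‖u‖ ^ 2))
          ^ ((p - 2) / p) *
        (∫ q : V × V, ‖b q.1 - b q.2‖ ^ p / ‖q.1 - q.2‖ ^ ((finrank ℝ V : ℝ) + p * θ)) ^ (2 / p) *
        s ^ (-(finrank ℝ V : ℝ) / p) * r ^ θ := by
  have hp2 : 0 < p - 2 := by linarith
  set n : ℝ := (finrank ℝ V : ℝ)
  set a : ℝ := 2 * (n + p * θ) / (p - 2)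
  have hs_exp : s ^ (-n / 2) * (s ^ (n / 2)) ^ ((p - 2) / p) = s ^ (-n / p) := by
    rw [← rpow_mul hs.le, ← rpow_add hs]; congr 1; field_simp; ring
  have hr_exp : r ^ (-n / 2) * (r ^ ((n + a) / 2)) ^ ((p - 2) / p) = r ^ θ := by
    rw [← rpow_mul hr.le, ← rpow_add hr]; congr 1; simp only [a]; field_simp; ring
  calc _ ≤ (r * s) ^ (-n / 2) * ((∫ q : V × V, ‖b q.1 - b q.2‖ ^ p / ‖q.1 - q.2‖ ^ (n + p * θ))
          ^ (2 / p) * ((π * s) ^ (n / 2) * (r ^ ((n + a) / 2) *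
            ∫ u : V, ‖u‖ ^ a * exp (-‖u‖ ^ 2))) ^ ((p - 2) / p)) := by
        gcongr
        exact integral_sq_mul_exp_mul_exp_le hp (by positivity) hr hs z hb
    _ = _ := by
        rw [mul_rpow hr.le hs.le, mul_rpow pi_nonneg hs.le, ← hs_exp, ← hr_exp,
          mul_rpow (by positivity) (by positivity), mul_rpow (by positivity) (by positivity),
          mul_rpow (by positivity) (by positivity), mul_rpow (by positivity) (by positivity)]
        ring

end Gaussian

theorem stmt18_general (d : ℕ) (p θ : ℝ) (hp : max 2 (d:ℝ) < p) (hθ : 0 < θ)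
    (b : EuclideanSpace ℝ (Fin d) → EuclideanSpace ℝ (Fin d))
    (hb : Integrable (fun q : EuclideanSpace ℝ (Fin d) × EuclideanSpace ℝ (Fin d) =>
      ‖b q.1 - b q.2‖ ^ p / ‖q.1 - q.2‖ ^ ((d:ℝ) + p * θ))) :
    ∃ C > 0, ∀ r s : ℝ, 0 < r → 0 < s → ∀ z : EuclideanSpace ℝ (Fin d),
      (r * s) ^ (-(d:ℝ)/2) *
        ∫ q : EuclideanSpace ℝ (Fin d) × EuclideanSpace ℝ (Fin d),
          ‖b q.1 - b q.2‖ ^ 2 * Real.exp (-‖q.1 - z‖ ^ 2 / s) *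
            Real.exp (-‖q.2 - q.1‖ ^ 2 / r)
      ≤ C * ((∫ q : EuclideanSpace ℝ (Fin d) × EuclideanSpace ℝ (Fin d),
            ‖b q.1 - b q.2‖ ^ p / ‖q.1 - q.2‖ ^ ((d:ℝ) + p * θ)) ^ (1/p)) ^ (2/p) *
          s ^ (-(d:ℝ)/p) * r ^ θ := by
  have hp2 : 2 < p := (le_max_left _ _).trans_lt hp
  set I := ∫ q : EuclideanSpace ℝ (Fin d) × EuclideanSpace ℝ (Fin d),
    ‖b q.1 - b q.2‖ ^ p / ‖q.1 - q.2‖ ^ ((d:ℝ) + p * θ)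
  set K := ∫ u : EuclideanSpace ℝ (Fin d), ‖u‖ ^ (2 * ((d:ℝ) + p * θ) / (p - 2)) * exp (-‖u‖ ^ 2)
  have hI : 0 ≤ I := integral_nonneg fun q => by positivity
  -- the estimate carries `I ^ (2/p)` but the claim `(I ^ (1/p)) ^ (2/p)`, so `C` depends on `I`
  obtain ⟨C, hC, hCI⟩ := exists_pos_le_mul_of_eq_zero
    (A := (π ^ ((d:ℝ) / 2) * K) ^ ((p - 2) / p) * I ^ (2 / p)) (B := (I ^ (1 / p)) ^ (2 / p))
    (by positivity) fun h => by
      rw [rpow_eq_zero (by positivity) (by positivity), rpow_eq_zero hI (by positivity)] at h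
      rw [h, zero_rpow (by positivity), mul_zero]
  refine ⟨C, hC, fun r s hr hs z => ?_⟩
  have h := rpow_mul_integral_sq_mul_exp_mul_exp_le hp2 hθ.le hr hs z
    (by rwa [finrank_euclideanSpace_fin])
  rw [finrank_euclideanSpace_fin] at h
  calc _ ≤ (π ^ ((d:ℝ) / 2) * K) ^ ((p - 2) / p) * I ^ (2 / p) * (s ^ (-(d:ℝ) / p) * r ^ θ) := by
        rw [← mul_assoc]; exact h
    _ ≤ C * (I ^ (1 / p)) ^ (2 / p) * (s ^ (-(d:ℝ) / p) * r ^ θ) := by gcongr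
    _ = _ := by ring

theorem stmt18 (d : ℕ) (hd : 0 < d) (p θ : ℝ) (hp : max 2 (d:ℝ) < p) (hθ : 0 < θ)
    (b : EuclideanSpace ℝ (Fin d) → EuclideanSpace ℝ (Fin d))
    (hb : Integrable (fun q : EuclideanSpace ℝ (Fin d) × EuclideanSpace ℝ (Fin d) =>
      ‖b q.1 - b q.2‖ ^ p / ‖q.1 - q.2‖ ^ ((d:ℝ) + p * θ))) :
    ∃ C > 0, ∀ r s : ℝ, 0 < r → 0 < s → ∀ z : EuclideanSpace ℝ (Fin d),
      (r * s) ^ (-(d:ℝ)/2) *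
        ∫ q : EuclideanSpace ℝ (Fin d) × EuclideanSpace ℝ (Fin d),
          ‖b q.1 - b q.2‖ ^ 2 * Real.exp (-‖q.1 - z‖ ^ 2 / s) *
            Real.exp (-‖q.2 - q.1‖ ^ 2 / r)
      ≤ C * ((∫ q : EuclideanSpace ℝ (Fin d) × EuclideanSpace ℝ (Fin d),
            ‖b q.1 - b q.2‖ ^ p / ‖q.1 - q.2‖ ^ ((d:ℝ) + p * θ)) ^ (1/p)) ^ (2/p) *
          s ^ (-(d:ℝ)/p) * r ^ θ :=
  stmt18_general d p θ hp hθ b hb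
end

section
/- For the one-dimensional indicator f = 𝟙_{[a,b]} with 0 < a < b, there is a constant C > 0 such that (rs)^{−1/2} ∫_{ℝ²} |f(x)−f(y)|² e^{−|x−z|²/s} e^{−|y−x|²/r} dy dx ≤ C s^{−1/2} r^{1/2} for all r, s > 0 and z ∈ ℝ; hence f ∈ GB²_{1/2,1/2}(ℝ). -/
/-!
If exactly one of `x`, `y` lies in `[a, b]`, an endpoint `e` of `[a, b]` lies between them, so
`(x - e)² ≤ (y - x)²` and half of the Gaussian `exp (-(y - x)² / r)` can be traded for
`exp (-(x - e)² / (2r))`. Bounding `exp (-(x - z)² / s)` by `1`, the integrand is dominated by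
`(exp (-(x - a)² / (2r)) + exp (-(x - b)² / (2r))) * exp (-(y - x)² / (2r))`, whose integral,
after the shear `(x, y) ↦ (x, y - x)`, is `2 √(2πr) · √(2πr) = 4πr`.
-/

open MeasureTheory Real Set

section Shear

variable {G : Type*} [AddGroup G] [MeasurableSpace G] [MeasurableAdd₂ G] [MeasurableNeg G]
  {μ ν : Measure G} [SFinite μ] [SFinite ν] [ν.IsAddRightInvariant]

theorem integrable_mul_comp_sub {F K : G → ℝ} (hF : Integrable F μ) (hK : Integrable K ν) :
    Integrable (fun q : G × G => F q.1 * K (q.2 - q.1)) (μ.prod ν) :=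
  ((measurePreserving_prod_sub μ ν).integrable_comp_emb
    (MeasurableEquiv.shearSubRight G).measurableEmbedding).2 (hF.mul_prod hK)

theorem integral_mul_comp_sub (F K : G → ℝ) :
    ∫ q : G × G, F q.1 * K (q.2 - q.1) ∂μ.prod ν = (∫ x, F x ∂μ) * ∫ u, K u ∂ν := by
  rw [← integral_prod_mul]
  exact (measurePreserving_prod_sub μ ν).integral_comp
    (MeasurableEquiv.shearSubRight G).measurableEmbedding (fun q : G × G => F q.1 * K q.2)

end Shear

section Gaussian

variable {t : ℝ} (c : ℝ)

theorem exp_neg_sq_sub_div_eq (x : ℝ) : exp (-(x - c) ^ 2 / t) = exp (-t⁻¹ * (x - c) ^ 2) := by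
  congr 1
  ring

theorem integrable_exp_neg_sq_sub_div (ht : 0 < t) :
    Integrable fun x : ℝ => exp (-(x - c) ^ 2 / t) := by
  simpa only [exp_neg_sq_sub_div_eq] using
    (integrable_exp_neg_mul_sq (inv_pos.2 ht)).comp_sub_right c

theorem integral_exp_neg_sq_sub_div : ∫ x : ℝ, exp (-(x - c) ^ 2 / t) = √(π * t) := by
  simp only [exp_neg_sq_sub_div_eq]
  rw [integral_sub_right_eq_self (fun x : ℝ => exp (-t⁻¹ * x ^ 2)) c, integral_gaussian,
    div_inv_eq_mul]

end Gaussian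

theorem exp_neg_div_le_exp_neg_div_two_mul {r u v : ℝ} (hr : 0 < r) (hvu : v ≤ u) :
    exp (-u / r) ≤ exp (-v / (2 * r)) * exp (-u / (2 * r)) := by
  rw [← exp_add, exp_le_exp, ← add_div, div_le_div_iff₀ hr (by positivity)]
  nlinarith

theorem sq_sub_endpoint_le_of_xor {a b x y : ℝ} (h : Xor (x ∈ Icc a b) (y ∈ Icc a b)) :
    (x - a) ^ 2 ≤ (y - x) ^ 2 ∨ (x - b) ^ 2 ≤ (y - x) ^ 2 := by
  simp only [Xor, mem_Icc, not_and_or, not_le] at h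
  rcases h with ⟨⟨hax, hxb⟩, hya | hby⟩ | ⟨⟨hay, hyb⟩, hxa | hbx⟩
  · exact .inl (by nlinarith)
  · exact .inr (by nlinarith)
  · exact .inl (by nlinarith)
  · exact .inr (by nlinarith)

theorem sq_indicator_sub_indicator_mul_exp_le {a b r : ℝ} (hr : 0 < r) (x y : ℝ) :
    ((Icc a b).indicator 1 x - (Icc a b).indicator 1 y) ^ 2 * exp (-(y - x) ^ 2 / r) ≤
      (exp (-(x - a) ^ 2 / (2 * r)) + exp (-(x - b) ^ 2 / (2 * r))) *
        exp (-(y - x) ^ 2 / (2 * r)) := by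
  by_cases hxy : Xor (x ∈ Icc a b) (y ∈ Icc a b)
  · have hjump : ((Icc a b).indicator (1 : ℝ → ℝ) x - (Icc a b).indicator 1 y) ^ 2 = 1 := by
      rcases hxy with ⟨hx, hy⟩ | ⟨hy, hx⟩ <;> simp [hx, hy]
    rw [hjump, one_mul, add_mul]
    rcases sq_sub_endpoint_le_of_xor hxy with h | h
    · exact (exp_neg_div_le_exp_neg_div_two_mul hr h).trans (le_add_of_nonneg_right (by positivity))
    · exact (exp_neg_div_le_exp_neg_div_two_mul hr h).trans (le_add_of_nonneg_left (by positivity))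
  · have hjump : (Icc a b).indicator (1 : ℝ → ℝ) x - (Icc a b).indicator 1 y = 0 := by
      by_cases hx : x ∈ Icc a b <;> by_cases hy : y ∈ Icc a b <;> simp_all [Xor]
    rw [hjump, zero_pow two_ne_zero, zero_mul]
    positivity

theorem integral_sq_indicator_Icc_sub_mul_exp_le (a b z : ℝ) {r s : ℝ} (hr : 0 < r)
    (hs : 0 ≤ s) :
    ∫ q : ℝ × ℝ, ((Icc a b).indicator 1 q.1 - (Icc a b).indicator 1 q.2) ^ 2 *
        exp (-(q.1 - z) ^ 2 / s) * exp (-(q.2 - q.1) ^ 2 / r) ≤ 4 * π * r := by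
  set F : ℝ → ℝ := fun x => exp (-(x - a) ^ 2 / (2 * r)) + exp (-(x - b) ^ 2 / (2 * r))
  set K : ℝ → ℝ := fun u => exp (-u ^ 2 / (2 * r))
  have h2r : 0 < 2 * r := by positivity
  have hF : Integrable F :=
    (integrable_exp_neg_sq_sub_div a h2r).add (integrable_exp_neg_sq_sub_div b h2r)
  have hK : Integrable K := by simpa using integrable_exp_neg_sq_sub_div 0 h2r
  have hdom : ∀ q : ℝ × ℝ, ((Icc a b).indicator 1 q.1 - (Icc a b).indicator 1 q.2) ^ 2 *
      exp (-(q.1 - z) ^ 2 / s) * exp (-(q.2 - q.1) ^ 2 / r) ≤ F q.1 * K (q.2 - q.1) := by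
    intro q
    have hz : exp (-(q.1 - z) ^ 2 / s) ≤ 1 :=
      exp_le_one_iff.2 (div_nonpos_of_nonpos_of_nonneg (neg_nonpos.2 (sq_nonneg _)) hs)
    calc _ = ((Icc a b).indicator 1 q.1 - (Icc a b).indicator 1 q.2) ^ 2 *
          exp (-(q.2 - q.1) ^ 2 / r) * exp (-(q.1 - z) ^ 2 / s) := by ring
      _ ≤ F q.1 * K (q.2 - q.1) * 1 :=
        mul_le_mul (sq_indicator_sub_indicator_mul_exp_le hr q.1 q.2) hz (exp_nonneg _)
          (by positivity)
      _ = F q.1 * K (q.2 - q.1) := mul_one _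
  calc _ ≤ ∫ q : ℝ × ℝ, F q.1 * K (q.2 - q.1) :=
        integral_mono_of_nonneg (.of_forall fun q => by positivity)
          (integrable_mul_comp_sub hF hK) (.of_forall hdom)
    _ = (√(π * (2 * r)) + √(π * (2 * r))) * √(π * (2 * r)) := by
      rw [Measure.volume_eq_prod, integral_mul_comp_sub, integral_add
        (integrable_exp_neg_sq_sub_div a h2r) (integrable_exp_neg_sq_sub_div b h2r)]
      have hKint : ∫ u, K u = √(π * (2 * r)) := by
        simpa using integral_exp_neg_sq_sub_div (t := 2 * r) 0
      rw [hKint, integral_exp_neg_sq_sub_div, integral_exp_neg_sq_sub_div]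
    _ = 4 * π * r := by
      rw [add_mul, mul_self_sqrt (by positivity)]
      ring

theorem stmt19_general (a b : ℝ) (f : ℝ → ℝ)
    (hf : f = Set.indicator (Set.Icc a b) 1) :
    ∃ C > 0, ∀ r s : ℝ, 0 < r → 0 < s → ∀ z : ℝ,
      (r * s) ^ (-(1:ℝ)/2) *
        ∫ q : ℝ × ℝ, (f q.1 - f q.2) ^ 2 * Real.exp (-(q.1 - z) ^ 2 / s) *
          Real.exp (-(q.2 - q.1) ^ 2 / r)
      ≤ C * s ^ (-(1:ℝ)/2) * r ^ ((1:ℝ)/2) := by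
  subst hf
  refine ⟨4 * π, by positivity, fun r s hr hs z => ?_⟩
  calc _ ≤ (r * s) ^ (-(1:ℝ)/2) * (4 * π * r) :=
        mul_le_mul_of_nonneg_left (integral_sq_indicator_Icc_sub_mul_exp_le a b z hr hs.le)
          (by positivity)
    _ = 4 * π * s ^ (-(1:ℝ)/2) * (r ^ (-(1:ℝ)/2) * r ^ (1:ℝ)) := by
      rw [mul_rpow hr.le hs.le, rpow_one]
      ring
    _ = 4 * π * s ^ (-(1:ℝ)/2) * r ^ ((1:ℝ)/2) := by
      rw [← rpow_add hr]
      norm_num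

theorem stmt19 (a b : ℝ) (ha : 0 < a) (hab : a < b) (f : ℝ → ℝ)
    (hf : f = Set.indicator (Set.Icc a b) 1) :
    ∃ C > 0, ∀ r s : ℝ, 0 < r → 0 < s → ∀ z : ℝ,
      (r * s) ^ (-(1:ℝ)/2) *
        ∫ q : ℝ × ℝ, (f q.1 - f q.2) ^ 2 * Real.exp (-(q.1 - z) ^ 2 / s) *
          Real.exp (-(q.2 - q.1) ^ 2 / r)
      ≤ C * s ^ (-(1:ℝ)/2) * r ^ ((1:ℝ)/2) :=
  stmt19_general a b f hf
end
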